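/- Let 0 < ν < 1 and 0 ≤ a < ∞. For every measurable function f and every x > a, the left-sided fractional Bessel integral of order 1 has the elementary form (B_{ν,a+}^{-1} f)(x) = (1/(ν−1)) ∫_a^x y (1 − (y/x)^{ν−1}) f(y) dy; in particular, for a = 0, (B_{ν,0+}^{-1} f)(x) = (1/(ν−1)) ∫_0^x y (1 − (y/x)^{ν−1}) f(y) dy. -/

import Mathlib

open MeasureTheory Real Set Filter

/-- Gauss hypergeometric function ₂F₁(a,b;c;z) as a power series with Pochhammer coefficients. -/
noncomputable def hyp2F1 (a b c z : ℝ) : ℝ :=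
  ∑' k : ℕ, ((ascPochhammer ℝ k).eval a * (ascPochhammer ℝ k).eval b /
    ((ascPochhammer ℝ k).eval c * (k.factorial : ℝ))) * z ^ k

/-- Kernel of the right-sided fractional Bessel integral. -/
noncomputable def besselKernelRight (ν α x y : ℝ) : ℝ :=
  ((y ^ 2 - x ^ 2) / (2 * y)) ^ (2 * α - 1) *
    hyp2F1 (α + (ν - 1) / 2) α (2 * α) (1 - x ^ 2 / y ^ 2)

/-- Right-sided fractional Bessel integral B_{ν,b-}^{-α} f at x, for finite b. -/
noncomputable def besselRight (ν α x b : ℝ) (f : ℝ → ℝ) : ℝ :=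
  (1 / Real.Gamma (2 * α)) * ∫ y in x..b, besselKernelRight ν α x y * f y

/-- Right-sided fractional Bessel integral B_{ν,-}^{-α} f at x (b = ∞). -/
noncomputable def besselRightInf (ν α x : ℝ) (f : ℝ → ℝ) : ℝ :=
  (1 / Real.Gamma (2 * α)) * ∫ y in Set.Ioi x, besselKernelRight ν α x y * f y

/-- Kernel of the left-sided fractional Bessel integral. -/
noncomputable def besselKernelLeft (ν α x y : ℝ) : ℝ :=
  (y / x) ^ ν * ((x ^ 2 - y ^ 2) / (2 * x)) ^ (2 * α - 1) *
    hyp2F1 (α + (ν - 1) / 2) α (2 * α) (1 - y ^ 2 / x ^ 2)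

/-- Left-sided fractional Bessel integral B_{ν,a+}^{-α} f at x. -/
noncomputable def besselLeft (ν α a x : ℝ) (f : ℝ → ℝ) : ℝ :=
  (1 / Real.Gamma (2 * α)) * ∫ y in a..x, besselKernelLeft ν α x y * f y

/-!
For `α = 1` the hypergeometric factor of the kernel is `₂F₁(p + 1, 1; 2; z)` with
`p = (ν - 1) / 2`. Since `p (p + 1)ₖ = (p)ₖ₊₁` and `(1)ₖ / (2)ₖ = 1 / (k + 1)`, the series
`p z ₂F₁(p + 1, 1; 2; z)` is the binomial series of `(1 - z)⁻ᵖ` without its constant term.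
At `z = 1 - y² / x²` this is `(y / x)^(1 - ν) - 1`, and the kernel collapses to
`y (1 - (y / x)^(ν - 1)) / (ν - 1)` for `0 < y < x`.
-/

theorem ascPochhammer_eval_two (S : Type*) [Semiring S] (n : ℕ) :
    (ascPochhammer S n).eval 2 = ((n + 1).factorial : S) := by
  simpa [one_add_one_eq_two, add_comm] using factorial_mul_ascPochhammer S 1 n

theorem ascPochhammer_succ_eval_left {S : Type*} [CommSemiring S] (p : S) (n : ℕ) :
    (ascPochhammer S (n + 1)).eval p = p * (ascPochhammer S n).eval (p + 1) := by
  simp [ascPochhammer_succ_left, Polynomial.eval_comp]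

theorem ascPochhammer_eval_div_factorial_eq_choose (p : ℝ) (n : ℕ) :
    (ascPochhammer ℝ n).eval p / n.factorial = Ring.choose (p + n - 1) n := by
  rw [← Ring.multichoose_eq, eq_comm, eq_div_iff (by positivity), mul_comm,
    ← nsmul_eq_mul, Ring.factorial_nsmul_multichoose_eq_ascPochhammer,
    Polynomial.ascPochhammer_smeval_eq_eval]

theorem hasSum_ascPochhammer_div_factorial_mul_pow (p : ℝ) {z : ℝ} (hz : |z| < 1) :
    HasSum (fun n : ℕ ↦ (ascPochhammer ℝ n).eval p / n.factorial * z ^ n)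
      ((1 - z) ^ (-p)) := by
  have h := (Real.one_div_one_sub_rpow_hasFPowerSeriesOnBall_zero p).hasSum
    (y := z) (by simpa [enorm_eq_nnnorm, ← NNReal.coe_lt_one] using hz)
  simp only [FormalMultilinearSeries.ofScalars_apply_eq, zero_add, smul_eq_mul] at h
  rw [Real.rpow_neg (by linarith [abs_lt.1 hz]), inv_eq_one_div]
  simpa only [ascPochhammer_eval_div_factorial_eq_choose] using h

theorem mul_hyp2F1_add_one_one_two (p : ℝ) {z : ℝ} (hz : |z| < 1) :
    p * z * hyp2F1 (p + 1) 1 2 z = (1 - z) ^ (-p) - 1 := by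
  have h := (hasSum_nat_add_iff' 1).mpr (hasSum_ascPochhammer_div_factorial_mul_pow p hz)
  simp only [Finset.range_one, Finset.sum_singleton, ascPochhammer_zero, Polynomial.eval_one,
    Nat.factorial_zero, Nat.cast_one, div_one, pow_zero, mul_one] at h
  rw [hyp2F1, ← tsum_mul_left]
  refine (h.congr_fun fun n ↦ ?_).tsum_eq
  rw [ascPochhammer_eval_one, ascPochhammer_eval_two, ascPochhammer_succ_eval_left]
  field_simp
  ring

theorem besselKernelLeft_one {ν x y : ℝ} (hν : ν ≠ 1) (hy : 0 < y) (hyx : y < x) :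
    besselKernelLeft ν 1 x y = 1 / (ν - 1) * (y * (1 - (y / x) ^ (ν - 1))) := by
  have hx : 0 < x := hy.trans hyx
  obtain ⟨t, rfl⟩ : ∃ t, y = t * x := ⟨y / x, (div_mul_cancel₀ y hx.ne').symm⟩
  have ht0 : 0 < t := (mul_pos_iff_of_pos_right hx).1 hy
  have ht1 : t < 1 := (mul_lt_iff_lt_one_left hx).1 hyx
  rw [besselKernelLeft, ← div_pow, mul_div_cancel_right₀ t hx.ne',
    show x ^ 2 - (t * x) ^ 2 = x ^ 2 * (1 - t ^ 2) by ring,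
    show (2 : ℝ) * 1 - 1 = 1 by norm_num, Real.rpow_one,
    show (1 : ℝ) + (ν - 1) / 2 = (ν - 1) / 2 + 1 by ring, show (2 : ℝ) * 1 = 2 by norm_num]
  have hz : |1 - t ^ 2| < 1 := by
    rw [abs_lt]; constructor <;> nlinarith
  have hF := mul_hyp2F1_add_one_one_two ((ν - 1) / 2) hz
  have hpow : (1 - (1 - t ^ 2)) ^ (-((ν - 1) / 2)) = (t ^ (ν - 1))⁻¹ := by
    rw [sub_sub_cancel, ← Real.rpow_natCast, ← Real.rpow_mul ht0.le, ← Real.rpow_neg ht0.le]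
    ring_nf
  have htν : t ^ ν = t ^ (ν - 1) * t := by
    rw [← Real.rpow_add_one ht0.ne', sub_add_cancel]
  have hr : t ^ (ν - 1) ≠ 0 := (Real.rpow_pos_of_pos ht0 _).ne'
  rw [htν]
  generalize hyp2F1 ((ν - 1) / 2 + 1) 1 2 (1 - t ^ 2) = F at hF ⊢
  rw [hpow] at hF
  have hν1 : ν - 1 ≠ 0 := sub_ne_zero.2 hν
  field_simp
  linear_combination (2 * t ^ (ν - 1)) * hF + 2 * mul_inv_cancel₀ hr

theorem statement8_general (ν a : ℝ) (hν1 : ν < 1) (ha : 0 ≤ a)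
    (f : ℝ → ℝ) (x : ℝ) (hx : a < x) :
    besselLeft ν 1 a x f =
      1 / (ν - 1) * ∫ y in a..x, y * (1 - (y / x) ^ (ν - 1)) * f y := by
  have hkernel : EqOn (fun y ↦ besselKernelLeft ν 1 x y * f y)
      (fun y ↦ 1 / (ν - 1) * (y * (1 - (y / x) ^ (ν - 1)) * f y)) (uIoo a x) := by
    intro y hy
    rw [uIoo_of_le hx.le] at hy
    simp only [besselKernelLeft_one hν1.ne (ha.trans_lt hy.1) hy.2, mul_assoc]
  rw [besselLeft, intervalIntegral.integral_congr_uIoo hkernel,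
    intervalIntegral.integral_const_mul, show (2 : ℝ) * 1 = 2 by norm_num, Real.Gamma_two,
    div_one, one_mul]

theorem statement8 (ν a : ℝ) (hν : 0 < ν) (hν1 : ν < 1) (ha : 0 ≤ a)
    (f : ℝ → ℝ) (hf : Measurable f) (x : ℝ) (hx : a < x) :
    besselLeft ν 1 a x f =
      1 / (ν - 1) * ∫ y in a..x, y * (1 - (y / x) ^ (ν - 1)) * f y :=
  statement8_general ν a hν1 ha f x hx
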